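/- arXiv:2401.00298 — 7 statements merged into one kernel-verified Lean document; each statement's English description precedes it below -/
import Mathlib

section
/- Let n be a positive integer, let v, c : {1,…,n} → ℝ be nonnegative, and let B ≥ 0. Then the maximum over all bonus allocations R : {1,…,n} → ℝ with R(i) ≥ 0 for all i and ∑_{i=1}^n R(i) ≤ B of the quantity (1/n)·∑_{i : R(i) ≥ c(i)} v(i) is attained, and it equals (1/n) times the 0/1-knapsack optimum max{ ∑_{i∈T} v(i) : T ⊆ {1,…,n}, ∑_{i∈T} c(i) ≤ B }. -/
open Finset
open scoped Classical

/-!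
An agent who plays 'left' on a set `S` of gadgets must have received at least `c i` for each
`i ∈ S`, so `S` costs at most the budget: every allocation achieves the value of some feasible
knapsack set. Conversely, paying exactly `c` on an optimal knapsack set `T` makes the agent play
'left' on (a superset of) `T`, and optimality of `T` pins its value down.
-/

variable {ι : Type*} [Fintype ι]

def IsKnapsackOptimal (v c : ι → ℝ) (B : ℝ) (T : Finset ι) : Prop :=
  ∑ i ∈ T, c i ≤ B ∧ ∀ T' : Finset ι, ∑ i ∈ T', c i ≤ B → ∑ i ∈ T', v i ≤ ∑ i ∈ T, v i

theorem exists_isKnapsackOptimal (v c : ι → ℝ) {B : ℝ} (hB : 0 ≤ B) :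
    ∃ T, IsKnapsackOptimal v c B T := by
  have hempty : (∅ : Finset ι) ∈ univ.filter (fun T : Finset ι => ∑ i ∈ T, c i ≤ B) := by
    simp [hB]
  obtain ⟨T, hT, hTmax⟩ := exists_max_image _ (fun T => ∑ i ∈ T, v i) ⟨_, hempty⟩
  exact ⟨T, (mem_filter.mp hT).2, fun T' hT' => hTmax T' (by simp [hT'])⟩

theorem sum_filter_le_sum_of_nonneg {c R : ι → ℝ} (hR : ∀ i, 0 ≤ R i) :
    ∑ i ∈ univ.filter (fun i => c i ≤ R i), c i ≤ ∑ i, R i :=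
  calc ∑ i ∈ univ.filter (fun i => c i ≤ R i), c i
      ≤ ∑ i ∈ univ.filter (fun i => c i ≤ R i), R i :=
        sum_le_sum fun _ hi => (mem_filter.mp hi).2
    _ ≤ ∑ i, R i := sum_le_sum_of_subset_of_nonneg (subset_univ _) fun i _ _ => hR i

namespace IsKnapsackOptimal

variable {v c : ι → ℝ} {B : ℝ} {T : Finset ι}

theorem sum_filter_le (hT : IsKnapsackOptimal v c B T) {R : ι → ℝ} (hR : ∀ i, 0 ≤ R i)
    (hRB : ∑ i, R i ≤ B) :
    ∑ i ∈ univ.filter (fun i => c i ≤ R i), v i ≤ ∑ i ∈ T, v i :=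
  hT.2 _ ((sum_filter_le_sum_of_nonneg hR).trans hRB)

theorem sum_indicator_le (hT : IsKnapsackOptimal v c B T) :
    ∑ i, (T : Set ι).indicator c i ≤ B := by
  rw [sum_indicator_subset _ (subset_univ T)]
  exact hT.1

theorem sum_filter_indicator_eq (hT : IsKnapsackOptimal v c B T) (hv : ∀ i, 0 ≤ v i)
    (hc : ∀ i, 0 ≤ c i) :
    ∑ i ∈ univ.filter (fun i => c i ≤ (T : Set ι).indicator c i), v i = ∑ i ∈ T, v i := by
  refine le_antisymm (hT.sum_filter_le (Set.indicator_nonneg fun i _ => hc i)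
    hT.sum_indicator_le) (sum_le_sum_of_subset_of_nonneg ?_ fun i _ _ => hv i)
  intro i hi
  simp [Set.indicator_of_mem (mem_coe.mpr hi)]

end IsKnapsackOptimal

theorem stmt_0_general (n : ℕ) (v c : Fin n → ℝ)
    (hv : ∀ i, 0 ≤ v i) (hc : ∀ i, 0 ≤ c i) (B : ℝ) (hB : 0 ≤ B) :
    ∃ R : Fin n → ℝ, (∀ i, 0 ≤ R i) ∧ (∑ i, R i) ≤ B ∧
      (∀ R' : Fin n → ℝ, (∀ i, 0 ≤ R' i) → (∑ i, R' i) ≤ B →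
        ((1 : ℝ) / n) * ∑ i ∈ univ.filter (fun i => c i ≤ R' i), v i ≤
          ((1 : ℝ) / n) * ∑ i ∈ univ.filter (fun i => c i ≤ R i), v i) ∧
      ∃ T : Finset (Fin n), (∑ i ∈ T, c i) ≤ B ∧
        (∀ T' : Finset (Fin n), (∑ i ∈ T', c i) ≤ B → ∑ i ∈ T', v i ≤ ∑ i ∈ T, v i) ∧
        ((1 : ℝ) / n) * ∑ i ∈ univ.filter (fun i => c i ≤ R i), v i =
          ((1 : ℝ) / n) * ∑ i ∈ T, v i := by
  obtain ⟨T, hT⟩ := exists_isKnapsackOptimal v c hB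
  have hvalue := hT.sum_filter_indicator_eq hv hc
  refine ⟨(T : Set (Fin n)).indicator c, Set.indicator_nonneg fun i _ => hc i,
    hT.sum_indicator_le, fun R' hR' hR'B => ?_, T, hT.1, hT.2, by rw [hvalue]⟩
  rw [hvalue]
  exact mul_le_mul_of_nonneg_left (hT.sum_filter_le hR' hR'B) (by positivity)

/-- value correspondence between the bonus-allocation problem over `n` gadgets
and the 0/1-knapsack problem. -/
theorem stmt_0 (n : ℕ) (hn : 0 < n) (v c : Fin n → ℝ)
    (hv : ∀ i, 0 ≤ v i) (hc : ∀ i, 0 ≤ c i) (B : ℝ) (hB : 0 ≤ B) :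
    ∃ R : Fin n → ℝ, (∀ i, 0 ≤ R i) ∧ (∑ i, R i) ≤ B ∧
      (∀ R' : Fin n → ℝ, (∀ i, 0 ≤ R' i) → (∑ i, R' i) ≤ B →
        ((1 : ℝ) / n) * ∑ i ∈ univ.filter (fun i => c i ≤ R' i), v i ≤
          ((1 : ℝ) / n) * ∑ i ∈ univ.filter (fun i => c i ≤ R i), v i) ∧
      ∃ T : Finset (Fin n), (∑ i ∈ T, c i) ≤ B ∧
        (∀ T' : Finset (Fin n), (∑ i ∈ T', c i) ≤ B → ∑ i ∈ T', v i ≤ ∑ i ∈ T, v i) ∧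
        ((1 : ℝ) / n) * ∑ i ∈ univ.filter (fun i => c i ≤ R i), v i =
          ((1 : ℝ) / n) * ∑ i ∈ T, v i :=
  stmt_0_general n v c hv hc B hB
end

section
/- In any DDP with agent reward R^A, agent-optimal policy π^A, and budget B ≥ 0, a policy π is B-implementable if and only if V(π, R^A) ≥ V(π^A, R^A) − B. -/
/-!
Write `V` as the sum of the rewards along the trajectory. A bonus can only raise the value of
`πA` and raises that of `π` by at most its total cost, so a `B`-implementable `π` loses at most
`B` against `πA`. Conversely, pay at each state `s` on the trajectory of `π` the regret
`V(πA, s) - (R^A(s, π s) + V(πA, next s (π s)))` of the action `π s`. These regrets sum to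
`V(πA) - V(π) ≤ B`, under the new reward `π` collects exactly `V(πA)`, and by the Bellman
inequality for `πA` no policy collects more.
-/

open Finset Relation

namespace DDP

variable {S A : Type*}

def IsPolicy (act : S → Finset A) (π : S → A) : Prop :=
  ∀ s, act s ≠ ∅ → π s ∈ act s

def IsRanking (act : S → Finset A) (next : S → A → S) (rank : S → ℕ) : Prop :=
  ∀ s, ∀ a ∈ act s, rank (next s a) < rank s

structure IsValue (act : S → Finset A) (next : S → A → S)
    (V : (S → A) → (S → A → ℝ) → S → ℝ) : Prop where
  terminal : ∀ π R s, act s = ∅ → V π R s = 0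
  step : ∀ π R s, act s ≠ ∅ → V π R s = R s (π s) + V π R (next s (π s))

variable {act : S → Finset A} {next : S → A → S} {rank : S → ℕ}
  {V : (S → A) → (S → A → ℝ) → S → ℝ}

theorem IsPolicy.update [DecidableEq S] {π : S → A} (hπ : IsPolicy act π) {s : S} {a : A}
    (ha : a ∈ act s) : IsPolicy act (Function.update π s a) := by
  intro t ht
  rcases eq_or_ne t s with rfl | hts
  · simpa using ha
  · simpa [hts] using hπ t ht

section Trajectory

def Moves (act : S → Finset A) (next : S → A → S) (π : S → A) (u v : S) : Prop :=
  act u ≠ ∅ ∧ v = next u (π u)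

open Classical in
noncomputable def trajectory [Fintype S] (act : S → Finset A) (next : S → A → S)
    (π : S → A) (s : S) : Finset S :=
  univ.filter fun t => act t ≠ ∅ ∧ ReflTransGen (Moves act next π) s t

theorem rank_le_of_reflTransGen_moves {π : S → A} (hrank : IsRanking act next rank)
    (hπ : IsPolicy act π) {s t : S} (h : ReflTransGen (Moves act next π) s t) :
    rank t ≤ rank s := by
  induction h with
  | refl => rfl
  | tail _ huv ih =>
    obtain ⟨hu, rfl⟩ := huv
    exact (hrank _ _ (hπ _ hu)).le.trans ih

variable [Fintype S]

theorem mem_trajectory {π : S → A} {s t : S} :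
    t ∈ trajectory act next π s ↔ act t ≠ ∅ ∧ ReflTransGen (Moves act next π) s t := by
  simp only [trajectory, mem_filter, mem_univ, true_and]

theorem trajectory_eq_empty {π : S → A} {s : S} (hs : act s = ∅) :
    trajectory act next π s = ∅ := by
  refine eq_empty_of_forall_notMem fun t ht => ?_
  obtain ⟨ht, hst⟩ := mem_trajectory.1 ht
  rcases ReflTransGen.cases_head hst with rfl | ⟨_, ⟨hs', _⟩, _⟩
  exacts [ht hs, hs' hs]

theorem trajectory_eq_insert [DecidableEq S] {π : S → A} {s : S} (hs : act s ≠ ∅) :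
    trajectory act next π s = insert s (trajectory act next π (next s (π s))) := by
  ext t
  rw [mem_insert, mem_trajectory, mem_trajectory, ReflTransGen.cases_head_iff]
  constructor
  · rintro ⟨ht, rfl | ⟨_, ⟨-, rfl⟩, h⟩⟩
    exacts [.inl rfl, .inr ⟨ht, h⟩]
  · rintro (rfl | ⟨ht, h⟩)
    exacts [⟨hs, .inl rfl⟩, ⟨ht, .inr ⟨_, ⟨hs, rfl⟩, h⟩⟩]

theorem notMem_trajectory_next {π : S → A} (hrank : IsRanking act next rank)
    (hπ : IsPolicy act π) {s : S} (hs : act s ≠ ∅) :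
    s ∉ trajectory act next π (next s (π s)) := fun h =>
  (hrank s (π s) (hπ s hs)).not_ge
    (rank_le_of_reflTransGen_moves hrank hπ (mem_trajectory.1 h).2)

theorem IsValue.eq_sum_trajectory (hV : IsValue act next V) (hrank : IsRanking act next rank)
    {π : S → A} (hπ : IsPolicy act π) (R : S → A → ℝ) (s : S) :
    V π R s = ∑ t ∈ trajectory act next π s, R t (π t) := by
  classical
  by_cases hs : act s = ∅
  · rw [hV.terminal π R s hs, trajectory_eq_empty hs, sum_empty]
  · have := hrank s (π s) (hπ s hs)
    rw [hV.step π R s hs, trajectory_eq_insert hs,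
      sum_insert (notMem_trajectory_next hrank hπ hs),
      hV.eq_sum_trajectory hrank hπ R (next s (π s))]
termination_by rank s

end Trajectory

theorem IsValue.add [Fintype S] (hV : IsValue act next V) (hrank : IsRanking act next rank)
    {π : S → A} (hπ : IsPolicy act π) (R₁ R₂ : S → A → ℝ) (s : S) :
    V π (fun s a => R₁ s a + R₂ s a) s = V π R₁ s + V π R₂ s := by
  simp only [hV.eq_sum_trajectory hrank hπ, sum_add_distrib]

theorem IsValue.nonneg [Fintype S] (hV : IsValue act next V) (hrank : IsRanking act next rank)
    {π : S → A} (hπ : IsPolicy act π) {R : S → A → ℝ} (hR : ∀ s a, 0 ≤ R s a) (s : S) :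
    0 ≤ V π R s := by
  rw [hV.eq_sum_trajectory hrank hπ]
  exact sum_nonneg fun t _ => hR t (π t)

theorem IsValue.le_sum [Fintype S] [Fintype A] (hV : IsValue act next V)
    (hrank : IsRanking act next rank) {π : S → A} (hπ : IsPolicy act π) {R : S → A → ℝ}
    (hR : ∀ s a, 0 ≤ R s a) (s : S) :
    V π R s ≤ ∑ t, ∑ a, R t a := calc
  V π R s = ∑ t ∈ trajectory act next π s, R t (π t) := hV.eq_sum_trajectory hrank hπ R s
  _ ≤ ∑ t, R t (π t) := sum_le_univ_sum_of_nonneg fun t => hR t (π t)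
  _ ≤ ∑ t, ∑ a, R t a := sum_le_sum fun t _ => single_le_sum (fun a _ => hR t a) (mem_univ _)

theorem IsValue.update_of_rank_lt [DecidableEq S] (hV : IsValue act next V)
    (hrank : IsRanking act next rank) {π : S → A} (hπ : IsPolicy act π) (R : S → A → ℝ)
    {s u : S} (a : A) (hu : rank u < rank s) :
    V (Function.update π s a) R u = V π R u := by
  by_cases hterm : act u = ∅
  · rw [hV.terminal _ R u hterm, hV.terminal _ R u hterm]
  · have hus : u ≠ s := by rintro rfl; exact hu.false
    have := hrank u (π u) (hπ u hterm)
    rw [hV.step _ R u hterm, hV.step _ R u hterm, Function.update_of_ne hus,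
      hV.update_of_rank_lt hrank hπ R a (this.trans hu)]
termination_by rank u

theorem IsValue.bellman (hV : IsValue act next V) (hrank : IsRanking act next rank)
    {πA : S → A} (hπA : IsPolicy act πA) {R : S → A → ℝ}
    (hopt : ∀ π, IsPolicy act π → ∀ s, V π R s ≤ V πA R s) {s : S} {a : A} (ha : a ∈ act s) :
    R s a + V πA R (next s a) ≤ V πA R s := by
  classical
  have hs : act s ≠ ∅ := ne_empty_of_mem ha
  have h := hopt _ (hπA.update ha) s
  rwa [hV.step _ R s hs, Function.update_self,
    hV.update_of_rank_lt hrank hπA R a (hrank s a ha)] at h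

section Bonus

def regret (next : S → A → S) (V : (S → A) → (S → A → ℝ) → S → ℝ) (πA : S → A)
    (R : S → A → ℝ) (s : S) (a : A) : ℝ :=
  V πA R s - (R s a + V πA R (next s a))

variable {πA : S → A} {R : S → A → ℝ}

theorem regret_nonneg (hV : IsValue act next V) (hrank : IsRanking act next rank)
    (hπA : IsPolicy act πA) (hopt : ∀ π, IsPolicy act π → ∀ s, V π R s ≤ V πA R s)
    {s : S} {a : A} (ha : a ∈ act s) : 0 ≤ regret next V πA R s a :=
  sub_nonneg.2 (hV.bellman hrank hπA hopt ha)

theorem IsValue.add_le_of_le_regret (hV : IsValue act next V) (hrank : IsRanking act next rank)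
    {RB : S → A → ℝ} (hRB : ∀ s, ∀ a ∈ act s, RB s a ≤ regret next V πA R s a)
    {π : S → A} (hπ : IsPolicy act π) (s : S) :
    V π (fun s a => R s a + RB s a) s ≤ V πA R s := by
  by_cases hs : act s = ∅
  · rw [hV.terminal _ _ s hs, hV.terminal _ _ s hs]
  · have := hrank s (π s) (hπ s hs)
    have hnext := hV.add_le_of_le_regret hrank hRB hπ (next s (π s))
    have hreg := hRB s (π s) (hπ s hs)
    rw [hV.step _ _ s hs]
    unfold regret at hreg
    linarith
termination_by rank s

variable [Fintype S]

open Classical in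
noncomputable def bonus (act : S → Finset A) (next : S → A → S)
    (V : (S → A) → (S → A → ℝ) → S → ℝ) (πA : S → A) (R : S → A → ℝ) (π : S → A) (s₀ : S) :
    S → A → ℝ := fun s a =>
  if s ∈ trajectory act next π s₀ ∧ a = π s then regret next V πA R s a else 0

variable {π : S → A} {s₀ : S}

theorem bonus_nonneg (hV : IsValue act next V) (hrank : IsRanking act next rank)
    (hπA : IsPolicy act πA) (hopt : ∀ π, IsPolicy act π → ∀ s, V π R s ≤ V πA R s)
    (hπ : IsPolicy act π) (s : S) (a : A) : 0 ≤ bonus act next V πA R π s₀ s a := by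
  unfold bonus
  split_ifs with h
  · obtain ⟨hs, rfl⟩ := h
    exact regret_nonneg hV hrank hπA hopt (hπ s (mem_trajectory.1 hs).1)
  · rfl

theorem bonus_le_regret (hV : IsValue act next V) (hrank : IsRanking act next rank)
    (hπA : IsPolicy act πA) (hopt : ∀ π, IsPolicy act π → ∀ s, V π R s ≤ V πA R s)
    {s : S} {a : A} (ha : a ∈ act s) :
    bonus act next V πA R π s₀ s a ≤ regret next V πA R s a := by
  unfold bonus
  split_ifs
  exacts [le_rfl, regret_nonneg hV hrank hπA hopt ha]

theorem IsValue.add_bonus_of_subset (hV : IsValue act next V) (hrank : IsRanking act next rank)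
    (hπ : IsPolicy act π) (s : S) (hs : trajectory act next π s ⊆ trajectory act next π s₀) :
    V π (fun s a => R s a + bonus act next V πA R π s₀ s a) s = V πA R s := by
  classical
  by_cases ht : act s = ∅
  · rw [hV.terminal _ _ s ht, hV.terminal _ _ s ht]
  · rw [trajectory_eq_insert ht, insert_subset_iff] at hs
    have := hrank s (π s) (hπ s ht)
    have hb : bonus act next V πA R π s₀ s (π s) = regret next V πA R s (π s) :=
      if_pos ⟨hs.1, rfl⟩
    rw [hV.step _ _ s ht, hb, hV.add_bonus_of_subset hrank hπ _ hs.2, regret]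
    ring
termination_by rank s

theorem IsValue.sum_bonus [Fintype A] (hV : IsValue act next V)
    (hrank : IsRanking act next rank) (hπ : IsPolicy act π) :
    ∑ s, ∑ a, bonus act next V πA R π s₀ s a = V πA R s₀ - V π R s₀ := by
  set b := bonus act next V πA R π s₀
  have hsum : ∑ s, ∑ a, b s a = V π b s₀ := calc
    ∑ s, ∑ a, b s a = ∑ s, b s (π s) :=
      sum_congr rfl fun s _ => sum_eq_single (π s) (fun a _ ha => by simp [b, bonus, ha])
        (by simp)
    _ = ∑ t ∈ trajectory act next π s₀, b t (π t) :=
      (sum_subset (subset_univ _) fun t _ ht => by simp [b, bonus, ht]).symm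
    _ = V π b s₀ := (hV.eq_sum_trajectory hrank hπ b s₀).symm
  have hval := hV.add_bonus_of_subset hrank hπ (πA := πA) (R := R) s₀ subset_rfl
  rw [hV.add hrank hπ] at hval
  linarith

end Bonus

end DDP

open DDP

theorem stmt_1_general {S A : Type} [Fintype S] [Fintype A]
    (s₀ : S) (act : S → Finset A) (next : S → A → S)
    (rank : S → ℕ) (hacyc : ∀ s, ∀ a ∈ act s, rank (next s a) < rank s)
    (V : (S → A) → (S → A → ℝ) → S → ℝ)
    (hVterm : ∀ (π : S → A) (R : S → A → ℝ) (s : S), act s = ∅ → V π R s = 0)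
    (hVrec : ∀ (π : S → A) (R : S → A → ℝ) (s : S), act s ≠ ∅ →
      V π R s = R s (π s) + V π R (next s (π s)))
    (RA : S → A → ℝ)
    (πA : S → A) (hπA : ∀ s, act s ≠ ∅ → πA s ∈ act s)
    (hπAopt : ∀ π : S → A, (∀ s, act s ≠ ∅ → π s ∈ act s) → ∀ s, V π RA s ≤ V πA RA s)
    (B : ℝ)
    (π : S → A) (hπ : ∀ s, act s ≠ ∅ → π s ∈ act s) :
    (∃ RB : S → A → ℝ, (∀ s a, 0 ≤ RB s a) ∧ (∑ s, ∑ a, RB s a) ≤ B ∧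
      ∀ π' : S → A, (∀ s, act s ≠ ∅ → π' s ∈ act s) →
        V π' (fun s a => RA s a + RB s a) s₀ ≤ V π (fun s a => RA s a + RB s a) s₀)
    ↔ V πA RA s₀ - B ≤ V π RA s₀ := by
  have hV : IsValue act next V := ⟨hVterm, hVrec⟩
  constructor
  · rintro ⟨RB, hRB, hcost, hopt⟩
    have : V πA RA s₀ ≤ V π RA s₀ + B := calc
      V πA RA s₀ ≤ V πA RA s₀ + V πA RB s₀ := le_add_of_nonneg_right (hV.nonneg hacyc hπA hRB s₀)
      _ = V πA (fun s a => RA s a + RB s a) s₀ := (hV.add hacyc hπA RA RB s₀).symm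
      _ ≤ V π (fun s a => RA s a + RB s a) s₀ := hopt πA hπA
      _ = V π RA s₀ + V π RB s₀ := hV.add hacyc hπ RA RB s₀
      _ ≤ V π RA s₀ + B := by linarith [hV.le_sum hacyc hπ hRB s₀]
    linarith
  · intro h
    refine ⟨bonus act next V πA RA π s₀, bonus_nonneg hV hacyc hπA hπAopt hπ,
      by linarith [hV.sum_bonus hacyc hπ (πA := πA) (R := RA) (s₀ := s₀)], fun π' hπ' => ?_⟩
    rw [hV.add_bonus_of_subset hacyc hπ s₀ subset_rfl]
    exact hV.add_le_of_le_regret hacyc (fun s a ha => bonus_le_regret hV hacyc hπA hπAopt ha) hπ' s₀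

/-- in a deterministic finite-horizon decision process (DDP), a policy `π`
is `B`-implementable if and only if `V(π, R^A) ≥ V(π^A, R^A) − B`. -/
theorem stmt_1 {S A : Type} [Fintype S] [Fintype A]
    (s₀ : S) (act : S → Finset A) (next : S → A → S)
    (rank : S → ℕ) (hacyc : ∀ s, ∀ a ∈ act s, rank (next s a) < rank s)
    (V : (S → A) → (S → A → ℝ) → S → ℝ)
    (hVterm : ∀ (π : S → A) (R : S → A → ℝ) (s : S), act s = ∅ → V π R s = 0)
    (hVrec : ∀ (π : S → A) (R : S → A → ℝ) (s : S), act s ≠ ∅ →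
      V π R s = R s (π s) + V π R (next s (π s)))
    (RA : S → A → ℝ)
    (πA : S → A) (hπA : ∀ s, act s ≠ ∅ → πA s ∈ act s)
    (hπAopt : ∀ π : S → A, (∀ s, act s ≠ ∅ → π s ∈ act s) → ∀ s, V π RA s ≤ V πA RA s)
    (B : ℝ) (hB : 0 ≤ B)
    (π : S → A) (hπ : ∀ s, act s ≠ ∅ → π s ∈ act s) :
    (∃ RB : S → A → ℝ, (∀ s a, 0 ≤ RB s a) ∧ (∑ s, ∑ a, RB s a) ≤ B ∧
      ∀ π' : S → A, (∀ s, act s ≠ ∅ → π' s ∈ act s) →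
        V π' (fun s a => RA s a + RB s a) s₀ ≤ V π (fun s a => RA s a + RB s a) s₀)
    ↔ V πA RA s₀ - B ≤ V π RA s₀ :=
  stmt_1_general s₀ act next rank hacyc V hVterm hVrec RA πA hπA hπAopt B π hπ
end

section
/- In any DDP, for every policy π, the minimum of the total cost ∑_{(s,a)} R^B(s,a) over all bonus functions R^B such that V(π, R^A+R^B) ≥ V(π', R^A+R^B) for every policy π' is attained, and this minimum equals V(π^A, R^A) − V(π, R^A). -/
/-!
Under every reward, the value of a policy is the sum of the reward over the non-terminal states
of its trajectory. If a nonnegative bonus `RB` makes `π` optimal for `RA + RB`, comparing `π` with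
`πA` gives `V πA RA + V πA RB ≤ V π RA + V π RB`, while `0 ≤ V πA RB` and `V π RB` is at most the
total cost; so the cost is at least `V πA RA - V π RA`. Conversely, pay at each state of the
trajectory of `π` the Bellman gap `V πA RA s - RA s (π s) - V πA RA (next s (π s))`. These gaps are
nonnegative by optimality of `πA` and telescope to `V πA RA s₀ - V π RA s₀`; moreover `V πA RA`
remains a supersolution of the Bellman inequalities for `RA + RB`, with equality along `π`, so no
policy beats `π`.
-/

open Finset

variable {S A : Type} (act : S → Finset A) (next : S → A → S)

def IsPolicy (π : S → A) : Prop := ∀ s, act s ≠ ∅ → π s ∈ act s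

def IsOptimalFrom (V : (S → A) → (S → A → ℝ) → S → ℝ) (R : S → A → ℝ) (π : S → A) (s : S) :
    Prop :=
  ∀ π', IsPolicy act π' → V π' R s ≤ V π R s

structure IsValueFunction (V : (S → A) → (S → A → ℝ) → S → ℝ) : Prop where
  terminal_eq_zero : ∀ π R s, act s = ∅ → V π R s = 0
  eq_add_next : ∀ π R s, act s ≠ ∅ → V π R s = R s (π s) + V π R (next s (π s))

def PolicyStep (π : S → A) (u v : S) : Prop := act u ≠ ∅ ∧ v = next u (π u)

open Classical in
noncomputable def visited [Fintype S] (π : S → A) (s : S) : Finset S :=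
  {t | Relation.ReflTransGen (PolicyStep act next π) s t ∧ act t ≠ ∅}

section Visited

variable {act next} {π : S → A}

theorem visited_of_terminal [Fintype S] {s : S} (hs : act s = ∅) :
    visited act next π s = ∅ := by
  refine eq_empty_of_forall_notMem fun t ht => ?_
  simp only [visited, mem_filter, mem_univ, true_and] at ht
  rcases ht.1.cases_head with rfl | ⟨_, ⟨hs', _⟩, _⟩
  exacts [ht.2 hs, hs' hs]

open Classical in
theorem visited_of_nonterminal [Fintype S] {s : S} (hs : act s ≠ ∅) :
    visited act next π s = insert s (visited act next π (next s (π s))) := by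
  ext t
  simp only [visited, mem_filter, mem_univ, true_and, mem_insert,
    Relation.ReflTransGen.cases_head_iff (a := s), PolicyStep, hs, ne_eq, not_false_eq_true,
    exists_eq_left, or_and_right]
  exact or_congr_left ((and_iff_left_of_imp fun (h : s = t) => h ▸ hs).trans eq_comm)

open Classical in
theorem act_ne_empty_of_mem_visited [Fintype S] {s t : S} (ht : t ∈ visited act next π s) :
    act t ≠ ∅ :=
  (mem_filter.1 ht).2.2

variable {rank : S → ℕ} (hacyc : ∀ s, ∀ a ∈ act s, rank (next s a) < rank s)
include hacyc

theorem rank_le_of_reflTransGen (hπ : IsPolicy act π) {u t : S}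
    (h : Relation.ReflTransGen (PolicyStep act next π) u t) : rank t ≤ rank u := by
  induction h with
  | refl => exact le_rfl
  | tail _ hvt ih =>
    obtain ⟨hv, rfl⟩ := hvt
    exact (hacyc _ _ (hπ _ hv)).le.trans ih

theorem notMem_visited_next [Fintype S] (hπ : IsPolicy act π) {s : S} (hs : act s ≠ ∅) :
    s ∉ visited act next π (next s (π s)) := by
  intro h
  simp only [visited, mem_filter, mem_univ, true_and] at h
  exact (rank_le_of_reflTransGen hacyc hπ h.1).not_gt (hacyc s _ (hπ s hs))

end Visited

section Value

variable {act next} {rank : S → ℕ} (hacyc : ∀ s, ∀ a ∈ act s, rank (next s a) < rank s)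
  {V : (S → A) → (S → A → ℝ) → S → ℝ} (hV : IsValueFunction act next V)
include hacyc hV

theorem value_congr_policy {π₁ π₂ : S → A} (hπ₁ : IsPolicy act π₁) (R : S → A → ℝ) (s : S)
    (h : ∀ t, rank t ≤ rank s → π₁ t = π₂ t) : V π₁ R s = V π₂ R s := by
  induction s using (measure rank).wf.induction with
  | _ s ih =>
    by_cases hs : act s = ∅
    · rw [hV.terminal_eq_zero _ _ _ hs, hV.terminal_eq_zero _ _ _ hs]
    · have hlt := hacyc s _ (hπ₁ s hs)
      rw [hV.eq_add_next _ _ _ hs, hV.eq_add_next _ _ _ hs, ← h s le_rfl,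
        ih _ hlt fun t ht => h t (ht.trans hlt.le)]

theorem add_value_next_le_of_optimal {R : S → A → ℝ} {πA : S → A} (hπA : IsPolicy act πA)
    (hopt : ∀ s, IsOptimalFrom act V R πA s) {s : S} {a : A} (ha : a ∈ act s) :
    R s a + V πA R (next s a) ≤ V πA R s := by
  classical
  set π := Function.update πA s a
  have hπ : IsPolicy act π := by
    intro t ht
    by_cases hts : t = s
    · subst hts; simpa [π] using ha
    · simpa [π, hts] using hπA t ht
  have hnext : V π R (next s a) = V πA R (next s a) :=
    value_congr_policy hacyc hV hπ R _ fun t ht =>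
      Function.update_of_ne (fun hts => by subst hts; exact absurd (hacyc t a ha) ht.not_gt) _ _
  have hs : V π R s = R s a + V πA R (next s a) := by
    rw [hV.eq_add_next _ _ _ (ne_empty_of_mem ha), ← hnext]
    simp only [π, Function.update_self]
  exact hs ▸ hopt s π hπ

theorem value_le_of_supersolution {R : S → A → ℝ} {W : S → ℝ}
    (hW₀ : ∀ s, act s = ∅ → 0 ≤ W s) (hW : ∀ s, ∀ a ∈ act s, R s a + W (next s a) ≤ W s)
    {π : S → A} (hπ : IsPolicy act π) (s : S) : V π R s ≤ W s := by
  induction s using (measure rank).wf.induction with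
  | _ s ih =>
    by_cases hs : act s = ∅
    · exact (hV.terminal_eq_zero _ _ _ hs).symm ▸ hW₀ s hs
    · have ha := hπ s hs
      rw [hV.eq_add_next _ _ _ hs]
      linarith [ih _ (hacyc s _ ha), hW s _ ha]

theorem value_telescope {W : S → ℝ} (hW₀ : ∀ s, act s = ∅ → W s = 0) (R : S → A → ℝ)
    {π : S → A} (hπ : IsPolicy act π) (s : S) :
    V π (fun s a => W s - R s a - W (next s a)) s = W s - V π R s := by
  induction s using (measure rank).wf.induction with
  | _ s ih =>
    by_cases hs : act s = ∅
    · rw [hV.terminal_eq_zero _ _ _ hs, hV.terminal_eq_zero _ _ _ hs, hW₀ s hs, sub_zero]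
    · rw [hV.eq_add_next _ _ _ hs, hV.eq_add_next _ _ _ hs,
        ih _ (hacyc s _ (hπ s hs))]
      ring

variable [Fintype S]

theorem value_eq_sum_visited {π : S → A} (hπ : IsPolicy act π) (R : S → A → ℝ) (s : S) :
    V π R s = ∑ t ∈ visited act next π s, R t (π t) := by
  classical
  induction s using (measure rank).wf.induction with
  | _ s ih =>
    by_cases hs : act s = ∅
    · rw [hV.terminal_eq_zero _ _ _ hs, visited_of_terminal hs, sum_empty]
    · rw [hV.eq_add_next _ _ _ hs, visited_of_nonterminal hs,
        sum_insert (notMem_visited_next hacyc hπ hs), ih _ (hacyc s _ (hπ s hs))]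

theorem value_add {π : S → A} (hπ : IsPolicy act π) (R₁ R₂ : S → A → ℝ) (s : S) :
    V π (fun s a => R₁ s a + R₂ s a) s = V π R₁ s + V π R₂ s := by
  simp only [value_eq_sum_visited hacyc hV hπ, sum_add_distrib]

theorem value_nonneg {π : S → A} (hπ : IsPolicy act π) {R : S → A → ℝ} (hR : ∀ s a, 0 ≤ R s a)
    (s : S) : 0 ≤ V π R s :=
  value_eq_sum_visited hacyc hV hπ R s ▸ sum_nonneg fun t _ => hR t (π t)

theorem value_le_sum_sum [Fintype A] {π : S → A} (hπ : IsPolicy act π) {R : S → A → ℝ}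
    (hR : ∀ s a, 0 ≤ R s a) (s : S) : V π R s ≤ ∑ t, ∑ a, R t a :=
  calc V π R s = ∑ t ∈ visited act next π s, R t (π t) := value_eq_sum_visited hacyc hV hπ R s
    _ ≤ ∑ t, R t (π t) := sum_le_univ_sum_of_nonneg fun t => hR t (π t)
    _ ≤ ∑ t, ∑ a, R t a := sum_le_sum fun t _ => single_le_sum (fun a _ => hR t a) (mem_univ _)

end Value

section Bonus

variable [Fintype S] [Fintype A] {act next} {rank : S → ℕ}
  (hacyc : ∀ s, ∀ a ∈ act s, rank (next s a) < rank s)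
  {V : (S → A) → (S → A → ℝ) → S → ℝ} (hV : IsValueFunction act next V)
  {RA : S → A → ℝ} {πA : S → A} (hπA : IsPolicy act πA)
  (hπAopt : ∀ s, IsOptimalFrom act V RA πA s)
  {π : S → A} (hπ : IsPolicy act π) (s₀ : S)
include hacyc hV hπA hπ

theorem value_sub_value_le_sum_sum_of_isOptimalFrom {RB : S → A → ℝ} (hRB : ∀ s a, 0 ≤ RB s a)
    (himpl : IsOptimalFrom act V (fun s a => RA s a + RB s a) π s₀) :
    V πA RA s₀ - V π RA s₀ ≤ ∑ s, ∑ a, RB s a := by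
  have h := himpl πA hπA
  rw [value_add hacyc hV hπA, value_add hacyc hV hπ] at h
  linarith [value_nonneg hacyc hV hπA hRB s₀, value_le_sum_sum hacyc hV hπ hRB s₀]

include hπAopt in
theorem exists_bonus_isOptimalFrom :
    ∃ RB : S → A → ℝ, (∀ s a, 0 ≤ RB s a) ∧
      IsOptimalFrom act V (fun s a => RA s a + RB s a) π s₀ ∧
      ∑ s, ∑ a, RB s a = V πA RA s₀ - V π RA s₀ := by
  classical
  set W := V πA RA
  set gap : S → A → ℝ := fun s a => W s - RA s a - W (next s a)
  set T := visited act next π s₀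
  have hW₀ : ∀ s, act s = ∅ → W s = 0 := fun s hs => hV.terminal_eq_zero _ _ _ hs
  have hgap : ∀ s, ∀ a ∈ act s, 0 ≤ gap s a := fun s a ha => by
    linarith [add_value_next_le_of_optimal hacyc hV hπA hπAopt ha]
  have hsum : ∑ t ∈ T, gap t (π t) = W s₀ - V π RA s₀ :=
    (value_eq_sum_visited hacyc hV hπ gap s₀).symm.trans (value_telescope hacyc hV hW₀ RA hπ s₀)
  set RB : S → A → ℝ := fun s a => if s ∈ T ∧ a = π s then gap s a else 0
  have hRB : ∑ t ∈ T, RB t (π t) = ∑ t ∈ T, gap t (π t) :=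
    sum_congr rfl fun t ht => if_pos ⟨ht, rfl⟩
  refine ⟨RB, fun s a => ?_, fun π' hπ' => ?_, ?_⟩
  · by_cases h : s ∈ T ∧ a = π s
    · simpa only [RB, if_pos h] using hgap s a (h.2 ▸ hπ s (act_ne_empty_of_mem_visited h.1))
    · simp only [RB, if_neg h, le_refl]
  · have hπ_val : V π (fun s a => RA s a + RB s a) s₀ = W s₀ := by
      rw [value_add hacyc hV hπ, value_eq_sum_visited hacyc hV hπ RB, hRB, hsum]
      ring
    refine hπ_val ▸ value_le_of_supersolution hacyc hV (fun s hs => (hW₀ s hs).ge)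
      (fun s a ha => ?_) hπ' s₀
    by_cases h : s ∈ T ∧ a = π s
    · simp only [RB, if_pos h, gap]
      linarith
    · simp only [RB, if_neg h, add_zero]
      exact add_value_next_le_of_optimal hacyc hV hπA hπAopt ha
  · rw [← hsum, ← hRB]
    simp [RB, ite_and]

end Bonus

/-- in a DDP, the minimum total cost of a bonus function implementing a
policy `π` is attained and equals `V(π^A, R^A) − V(π, R^A)`. -/
theorem stmt_3 {S A : Type} [Fintype S] [Fintype A]
    (s₀ : S) (act : S → Finset A) (next : S → A → S)
    (rank : S → ℕ) (hacyc : ∀ s, ∀ a ∈ act s, rank (next s a) < rank s)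
    (V : (S → A) → (S → A → ℝ) → S → ℝ)
    (hVterm : ∀ (π : S → A) (R : S → A → ℝ) (s : S), act s = ∅ → V π R s = 0)
    (hVrec : ∀ (π : S → A) (R : S → A → ℝ) (s : S), act s ≠ ∅ →
      V π R s = R s (π s) + V π R (next s (π s)))
    (RA : S → A → ℝ)
    (πA : S → A) (hπA : ∀ s, act s ≠ ∅ → πA s ∈ act s)
    (hπAopt : ∀ π : S → A, (∀ s, act s ≠ ∅ → π s ∈ act s) → ∀ s, V π RA s ≤ V πA RA s)
    (π : S → A) (hπ : ∀ s, act s ≠ ∅ → π s ∈ act s) :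
    ∃ RB : S → A → ℝ, (∀ s a, 0 ≤ RB s a) ∧
      (∀ π' : S → A, (∀ s, act s ≠ ∅ → π' s ∈ act s) →
        V π' (fun s a => RA s a + RB s a) s₀ ≤ V π (fun s a => RA s a + RB s a) s₀) ∧
      (∑ s, ∑ a, RB s a) = V πA RA s₀ - V π RA s₀ ∧
      (∀ RB' : S → A → ℝ, (∀ s a, 0 ≤ RB' s a) →
        (∀ π' : S → A, (∀ s, act s ≠ ∅ → π' s ∈ act s) →
          V π' (fun s a => RA s a + RB' s a) s₀ ≤ V π (fun s a => RA s a + RB' s a) s₀) →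
        (∑ s, ∑ a, RB s a) ≤ ∑ s, ∑ a, RB' s a) := by
  have hV : IsValueFunction act next V := ⟨hVterm, hVrec⟩
  have hπAopt' : ∀ s, IsOptimalFrom act V RA πA s := fun s π' hπ' => hπAopt π' hπ' s
  obtain ⟨RB, hRB, himpl, hcost⟩ := exists_bonus_isOptimalFrom hacyc hV hπA hπAopt' hπ s₀
  exact ⟨RB, hRB, himpl, hcost, fun RB' hRB' himpl' =>
    hcost ▸ value_sub_value_le_sum_sum_of_isOptimalFrom hacyc hV hπA hπ s₀ hRB' himpl'⟩
end

section
/- In a finite acyclic MDP, if a policy π is B-implementable for some budget B ≥ 0, then the infimum of the total cost ∑_{(s,a)} R(s,a) over all bonus functions R such that V_{s₀}(π, R^A + R) ≥ V_{s₀}(π', R^A + R) for every policy π' is attained; that is, π admits a minimal implementation. -/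
/-!
Acyclicity lets one unfold the value recursion along decreasing rank, so every value
`V π' (RA + R) s` is a continuous function of the bonus `R`. The bonuses that are nonnegative
and implement `π` therefore form a closed set, nonempty by assumption. On it the total cost is
continuous and its sublevel sets are bounded (all entries are nonnegative), hence compact,
so the cost attains its minimum.
-/

open Finset

theorem continuous_apply_of_rank_recursion {X S : Type*} [TopologicalSpace X] [Fintype S]
    (rank : S → ℕ) (IsTerminal : S → Prop) (W : X → S → ℝ) (c : S → X → ℝ) (p : S → S → ℝ)
    (hc : ∀ s, Continuous (c s))
    (hp : ∀ s, ¬ IsTerminal s → ∀ t, p s t ≠ 0 → rank t < rank s)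
    (hterm : ∀ x s, IsTerminal s → W x s = 0)
    (hrec : ∀ x s, ¬ IsTerminal s → W x s = c s x + ∑ t, p s t * W x t) (s : S) :
    Continuous fun x => W x s := by
  induction hs : rank s using Nat.strong_induction_on generalizing s with
  | _ n ih =>
  by_cases h : IsTerminal s
  · exact continuous_const.congr fun x => (hterm x s h).symm
  · refine ((hc s).add (continuous_finsetSum _ fun t _ => ?_)).congr fun x => (hrec x s h).symm
    by_cases hpt : p s t = 0
    · simp only [hpt, zero_mul]
      exact continuous_const
    · exact continuous_const.mul (ih _ (hs ▸ hp s h t hpt) t rfl)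

theorem exists_isMinOn_sum_sum_of_isClosed {ι κ : Type*} [Fintype ι] [Fintype κ]
    {K : Set (ι → κ → ℝ)} (hK : IsClosed K) (hK0 : ∀ R ∈ K, ∀ i j, 0 ≤ R i j)
    (hne : K.Nonempty) : ∃ R ∈ K, IsMinOn (fun R => ∑ i, ∑ j, R i j) K R := by
  have hcost : Continuous fun R : ι → κ → ℝ => ∑ i, ∑ j, R i j := by fun_prop
  obtain ⟨R₁, hR₁⟩ := hne
  set b := ∑ i, ∑ j, R₁ i j
  have hsub : K ∩ {R | ∑ i, ∑ j, R i j ≤ b} ⊆ Set.Icc 0 (fun _ _ => b) := by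
    rintro R ⟨hRK, hRb⟩
    refine ⟨fun i j => hK0 R hRK i j, fun i j => ?_⟩
    calc R i j ≤ ∑ j, R i j := single_le_sum (fun j _ => hK0 R hRK i j) (mem_univ j)
      _ ≤ ∑ i, ∑ j, R i j :=
          single_le_sum (fun i _ => sum_nonneg fun j _ => hK0 R hRK i j) (mem_univ i)
      _ ≤ b := hRb
  have hcompact : IsCompact (K ∩ {R | ∑ i, ∑ j, R i j ≤ b}) :=
    isCompact_Icc.of_isClosed_subset (hK.inter (isClosed_le hcost continuous_const)) hsub
  obtain ⟨R, ⟨hRK, hRb⟩, hmin⟩ :=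
    hcompact.exists_isMinOn ⟨R₁, hR₁, le_refl b⟩ hcost.continuousOn
  refine ⟨R, hRK, fun R' hR' => ?_⟩
  by_cases hR'b : ∑ i, ∑ j, R' i j ≤ b
  · exact hmin ⟨hR', hR'b⟩
  · exact hRb.trans (le_of_not_ge hR'b)

theorem stmt_9_general {S A : Type} [Fintype S] [Fintype A]
    (s₀ : S) (act : S → Finset A)
    (P : S → A → S → ℝ)
    (hP0 : ∀ s a t, 0 ≤ P s a t)
    (rank : S → ℕ)
    (hacyc : ∀ s, ∀ a ∈ act s, ∀ t, 0 < P s a t → rank t < rank s)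
    (V : (S → A) → (S → A → ℝ) → S → ℝ)
    (hVterm : ∀ (π : S → A) (R : S → A → ℝ) (s : S), act s = ∅ → V π R s = 0)
    (hVrec : ∀ (π : S → A) (R : S → A → ℝ) (s : S), act s ≠ ∅ →
      V π R s = R s (π s) + ∑ t, P s (π s) t * V π R t)
    (RA : S → A → ℝ)
    (π : S → A) (hπ : ∀ s, act s ≠ ∅ → π s ∈ act s)
    (B : ℝ)
    (himpl : ∃ RB : S → A → ℝ, (∀ s a, 0 ≤ RB s a) ∧ (∑ s, ∑ a, RB s a) ≤ B ∧
      ∀ π' : S → A, (∀ s, act s ≠ ∅ → π' s ∈ act s) →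
        V π' (fun s b => RA s b + RB s b) s₀ ≤ V π (fun s b => RA s b + RB s b) s₀) :
    ∃ R : S → A → ℝ, (∀ s a, 0 ≤ R s a) ∧
      (∀ π' : S → A, (∀ s, act s ≠ ∅ → π' s ∈ act s) →
        V π' (fun s b => RA s b + R s b) s₀ ≤ V π (fun s b => RA s b + R s b) s₀) ∧
      ∀ R' : S → A → ℝ, (∀ s a, 0 ≤ R' s a) →
        (∀ π' : S → A, (∀ s, act s ≠ ∅ → π' s ∈ act s) →
          V π' (fun s b => RA s b + R' s b) s₀ ≤ V π (fun s b => RA s b + R' s b) s₀) →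
        (∑ s, ∑ a, R s a) ≤ ∑ s, ∑ a, R' s a := by
  obtain ⟨RB, hRB0, -, hRB⟩ := himpl
  have hV : ∀ π' : S → A, (∀ s, act s ≠ ∅ → π' s ∈ act s) →
      Continuous fun R : S → A → ℝ => V π' (fun s b => RA s b + R s b) s₀ := fun π' hπ' =>
    continuous_apply_of_rank_recursion rank (fun s => act s = ∅)
      (fun R : S → A → ℝ => V π' fun s b => RA s b + R s b)
      (fun s R => RA s (π' s) + R s (π' s))
      (fun s t => P s (π' s) t) (fun _ => by fun_prop)
      (fun s hs t hpt => hacyc s _ (hπ' s hs) t ((hP0 _ _ _).lt_of_ne' hpt))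
      (fun _ s hs => hVterm _ _ s hs) (fun _ s hs => hVrec _ _ s hs) s₀
  let K := {R : S → A → ℝ | (∀ s a, 0 ≤ R s a) ∧ ∀ π' : S → A,
    (∀ s, act s ≠ ∅ → π' s ∈ act s) →
      V π' (fun s b => RA s b + R s b) s₀ ≤ V π (fun s b => RA s b + R s b) s₀}
  have hK : IsClosed K := by
    simp only [K, Set.ofPred_and, Set.ofPred_forall]
    exact (isClosed_iInter fun s => isClosed_iInter fun a =>
        isClosed_le continuous_const (by fun_prop)).inter
      (isClosed_iInter fun π' => isClosed_iInter fun hπ' => isClosed_le (hV π' hπ') (hV π hπ))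
  obtain ⟨R, ⟨hR0, hR⟩, hmin⟩ :=
    exists_isMinOn_sum_sum_of_isClosed hK (fun _ hR => hR.1) ⟨RB, hRB0, hRB⟩
  exact ⟨R, hR0, hR, fun R' hR'0 hR' => hmin ⟨hR'0, hR'⟩⟩

/-- in a finite acyclic MDP, if a policy `π` is `B`-implementable then the
infimum of the total cost over bonus functions implementing `π` (from the initial state)
is attained: `π` admits a minimal implementation. -/
theorem stmt_9 {S A : Type} [Fintype S] [Fintype A]
    (s₀ : S) (act : S → Finset A)
    (P : S → A → S → ℝ)
    (hP0 : ∀ s a t, 0 ≤ P s a t)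
    (hP1 : ∀ s, ∀ a ∈ act s, ∑ t, P s a t = 1)
    (rank : S → ℕ)
    (hacyc : ∀ s, ∀ a ∈ act s, ∀ t, 0 < P s a t → rank t < rank s)
    (V : (S → A) → (S → A → ℝ) → S → ℝ)
    (hVterm : ∀ (π : S → A) (R : S → A → ℝ) (s : S), act s = ∅ → V π R s = 0)
    (hVrec : ∀ (π : S → A) (R : S → A → ℝ) (s : S), act s ≠ ∅ →
      V π R s = R s (π s) + ∑ t, P s (π s) t * V π R t)
    (RA : S → A → ℝ)
    (π : S → A) (hπ : ∀ s, act s ≠ ∅ → π s ∈ act s)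
    (B : ℝ) (hB : 0 ≤ B)
    (himpl : ∃ RB : S → A → ℝ, (∀ s a, 0 ≤ RB s a) ∧ (∑ s, ∑ a, RB s a) ≤ B ∧
      ∀ π' : S → A, (∀ s, act s ≠ ∅ → π' s ∈ act s) →
        V π' (fun s b => RA s b + RB s b) s₀ ≤ V π (fun s b => RA s b + RB s b) s₀) :
    ∃ R : S → A → ℝ, (∀ s a, 0 ≤ R s a) ∧
      (∀ π' : S → A, (∀ s, act s ≠ ∅ → π' s ∈ act s) →
        V π' (fun s b => RA s b + R s b) s₀ ≤ V π (fun s b => RA s b + R s b) s₀) ∧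
      ∀ R' : S → A → ℝ, (∀ s a, 0 ≤ R' s a) →
        (∀ π' : S → A, (∀ s, act s ≠ ∅ → π' s ∈ act s) →
          V π' (fun s b => RA s b + R' s b) s₀ ≤ V π (fun s b => RA s b + R' s b) s₀) →
        (∑ s, ∑ a, R s a) ≤ ∑ s, ∑ a, R' s a :=
  stmt_9_general s₀ act P hP0 rank hacyc V hVterm hVrec RA π hπ B himpl
end

section
/- In any DDP, for every non-terminal state s, Pareto(𝒰_s) = Pareto( ⋃_{a ∈ A(s)} ( (R^A(s,a), R^P(s,a)) + Pareto(𝒰_{next(s,a)}) ) ), where v + U denotes the translate {v + u : u ∈ U}: the Pareto frontier of the set of attainable utility-vector pairs at a state is obtained from the Pareto frontiers at its successor states by translating by the one-step reward pair, taking the union over actions, and discarding dominated vectors. -/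
/-!
Every policy's value pair at `s` is the one-step reward pair of its action plus its value pair at
the successor state; conversely, any value pair attainable at `next s a` can be prefixed by the
action `a`, because by acyclicity the value from `next s a` does not see the choice made at `s`.
Hence `𝒰_s` is the union over actions of the translates of the sets `𝒰_{next s a}`. Translations
are monotone and the Pareto frontier of a finite set is a subset cofinal in it, so the union of
the translated frontiers is cofinal in the union of the translated sets, and two sets, one inside
and cofinal in the other, have the same maximal elements.
-/

section Frontier

variable {α β : Type*}

lemma setOf_not_dominated_eq_setOf_maximal [PartialOrder α] (X : Set α) :
    {u ∈ X | ¬∃ w ∈ X, u ≤ w ∧ u ≠ w} = {u | Maximal (· ∈ X) u} := by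
  ext u
  simp only [Set.mem_ofPred_eq, maximal_iff, not_exists, not_and, not_not]

lemma isCofinalFor_iUnion [Preorder α] {ι : Sort*} {s t : ι → Set α}
    (h : ∀ i, IsCofinalFor (s i) (t i)) : IsCofinalFor (⋃ i, s i) (⋃ i, t i) := by
  intro a ha
  obtain ⟨i, hi⟩ := Set.mem_iUnion.1 ha
  obtain ⟨b, hb, hab⟩ := h i hi
  exact ⟨b, Set.mem_iUnion.2 ⟨i, hb⟩, hab⟩

lemma Set.Finite.isCofinalFor_setOf_maximal [Preorder α] {X : Set α} (hX : X.Finite) :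
    IsCofinalFor X {x | Maximal (· ∈ X) x} := fun _ hx ↦
  let ⟨b, hxb, hb⟩ := hX.exists_le_maximal hx
  ⟨b, hb, hxb⟩

lemma setOf_maximal_eq_of_subset_of_isCofinalFor [PartialOrder α] {X Y : Set α} (hYX : Y ⊆ X)
    (hcof : IsCofinalFor X Y) : {u | Maximal (· ∈ X) u} = {u | Maximal (· ∈ Y) u} := by
  ext u
  constructor
  · intro hu
    obtain ⟨y, hy, huy⟩ := hcof hu.prop
    obtain rfl : u = y := hu.eq_of_le (hYX hy) huy
    exact hu.mono hYX hy
  · intro hu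
    refine ⟨hYX hu.prop, fun w hw huw ↦ ?_⟩
    obtain ⟨y, hy, hwy⟩ := hcof hw
    exact hwy.trans (hu.2 hy (huw.trans hwy))

lemma setOf_maximal_biUnion_image_setOf_maximal [PartialOrder α] [PartialOrder β]
    {ι : Type*} {p : ι → Prop} {f : ι → α → β} (hf : ∀ i, Monotone (f i)) {X : ι → Set α}
    (hX : ∀ i, p i → (X i).Finite) :
    {u | Maximal (· ∈ ⋃ (i) (_ : p i), f i '' X i) u} =
      {u | Maximal (· ∈ ⋃ (i) (_ : p i), f i '' {x | Maximal (· ∈ X i) x}) u} := by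
  refine setOf_maximal_eq_of_subset_of_isCofinalFor
    (Set.iUnion₂_mono fun i _ ↦ Set.image_mono fun _ hx ↦ hx.prop) ?_
  exact isCofinalFor_iUnion fun i ↦ isCofinalFor_iUnion fun hi ↦
    ((hX i hi).isCofinalFor_setOf_maximal).image_of_monotone (hf i)

end Frontier

section DDP

variable {S A : Type*} (act : S → Finset A) (V : (S → A) → (S → A → ℝ) → S → ℝ)

def IsAdmissible (π : S → A) : Prop := ∀ r, act r ≠ ∅ → π r ∈ act r

def attainable (RA RP : S → A → ℝ) (t : S) : Set (ℝ × ℝ) :=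
  {u | ∃ π : S → A, IsAdmissible act π ∧ u = (V π RA t, V π RP t)}

theorem attainable_finite [Finite S] [Finite A] (RA RP : S → A → ℝ) (t : S) :
    (attainable act V RA RP t).Finite :=
  (Set.finite_range fun π : S → A ↦ ((V π RA t, V π RP t) : ℝ × ℝ)).subset
    fun _ ⟨π, _, hu⟩ ↦ ⟨π, hu.symm⟩

variable {act}

lemma IsAdmissible.update [DecidableEq S] {π : S → A} (hπ : IsAdmissible act π) {s : S} {a : A}
    (ha : a ∈ act s) : IsAdmissible act (Function.update π s a) := by
  intro r hr
  rcases eq_or_ne r s with rfl | hrs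
  · rwa [Function.update_self]
  · rw [Function.update_of_ne hrs]
    exact hπ r hr

variable {V} {next : S → A → S} {rank : S → ℕ}

theorem value_eq_of_eqOn_rank_le (hacyc : ∀ s, ∀ a ∈ act s, rank (next s a) < rank s)
    (hVterm : ∀ (π : S → A) (R : S → A → ℝ) (s : S), act s = ∅ → V π R s = 0)
    (hVrec : ∀ (π : S → A) (R : S → A → ℝ) (s : S), act s ≠ ∅ →
      V π R s = R s (π s) + V π R (next s (π s)))
    {π π' : S → A} (hπ : IsAdmissible act π) (R : S → A → ℝ) (t : S)
    (h : ∀ r, rank r ≤ rank t → π r = π' r) : V π R t = V π' R t := by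
  induction hn : rank t using Nat.strong_induction_on generalizing t with
  | _ n ih =>
  by_cases ht : act t = ∅
  · rw [hVterm π R t ht, hVterm π' R t ht]
  · have hlt := hacyc t (π t) (hπ t ht)
    rw [hVrec π R t ht, hVrec π' R t ht, ← h t le_rfl,
      ih _ (hn ▸ hlt) _ (fun r hr ↦ h r (by omega)) rfl]

theorem value_update_next [DecidableEq S] (hacyc : ∀ s, ∀ a ∈ act s, rank (next s a) < rank s)
    (hVterm : ∀ (π : S → A) (R : S → A → ℝ) (s : S), act s = ∅ → V π R s = 0)
    (hVrec : ∀ (π : S → A) (R : S → A → ℝ) (s : S), act s ≠ ∅ →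
      V π R s = R s (π s) + V π R (next s (π s)))
    {π : S → A} (hπ : IsAdmissible act π) (R : S → A → ℝ) {s : S} {a : A} (ha : a ∈ act s) :
    V (Function.update π s a) R (next s a) = V π R (next s a) := by
  refine (value_eq_of_eqOn_rank_le hacyc hVterm hVrec hπ R _ fun r hr ↦ ?_).symm
  have hrs : r ≠ s := by
    rintro rfl
    exact (hacyc r a ha).not_ge hr
  rw [Function.update_of_ne hrs]

theorem attainable_eq_biUnion (hacyc : ∀ s, ∀ a ∈ act s, rank (next s a) < rank s)
    (hVterm : ∀ (π : S → A) (R : S → A → ℝ) (s : S), act s = ∅ → V π R s = 0)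
    (hVrec : ∀ (π : S → A) (R : S → A → ℝ) (s : S), act s ≠ ∅ →
      V π R s = R s (π s) + V π R (next s (π s)))
    (RA RP : S → A → ℝ) {s : S} (hs : act s ≠ ∅) :
    attainable act V RA RP s = ⋃ a ∈ act s,
      (fun u ↦ ((RA s a, RP s a) : ℝ × ℝ) + u) '' attainable act V RA RP (next s a) := by
  classical
  ext u
  simp only [Set.mem_iUnion, Set.mem_image]
  constructor
  · rintro ⟨π, hπ, rfl⟩
    refine ⟨π s, hπ s hs, _, ⟨π, hπ, rfl⟩, ?_⟩
    rw [hVrec π RA s hs, hVrec π RP s hs]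
    rfl
  · rintro ⟨a, ha, _, ⟨π, hπ, rfl⟩, rfl⟩
    refine ⟨Function.update π s a, hπ.update ha, ?_⟩
    rw [hVrec _ RA s hs, hVrec _ RP s hs, Function.update_self,
      value_update_next hacyc hVterm hVrec hπ RA ha,
      value_update_next hacyc hVterm hVrec hπ RP ha]
    rfl

end DDP

/-- in a DDP, the Pareto frontier of the attainable utility-vector set at a
non-terminal state equals the Pareto frontier of the union, over actions, of the one-step
reward translates of the Pareto frontiers at the successor states. -/
theorem stmt_10 {S A : Type} [Fintype S] [Fintype A]
    (act : S → Finset A) (next : S → A → S)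
    (rank : S → ℕ) (hacyc : ∀ s, ∀ a ∈ act s, rank (next s a) < rank s)
    (V : (S → A) → (S → A → ℝ) → S → ℝ)
    (hVterm : ∀ (π : S → A) (R : S → A → ℝ) (s : S), act s = ∅ → V π R s = 0)
    (hVrec : ∀ (π : S → A) (R : S → A → ℝ) (s : S), act s ≠ ∅ →
      V π R s = R s (π s) + V π R (next s (π s)))
    (RA RP : S → A → ℝ)
    (Pareto : Set (ℝ × ℝ) → Set (ℝ × ℝ))
    (hPareto : ∀ X : Set (ℝ × ℝ), Pareto X = {u ∈ X | ¬∃ w ∈ X, u ≤ w ∧ u ≠ w})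
    (U : S → Set (ℝ × ℝ))
    (hU : ∀ t, U t = {u | ∃ π : S → A, (∀ r, act r ≠ ∅ → π r ∈ act r) ∧
      u = (V π RA t, V π RP t)})
    (s : S) (hs : act s ≠ ∅) :
    Pareto (U s) =
      Pareto (⋃ a ∈ act s,
        (fun u => ((RA s a, RP s a) : ℝ × ℝ) + u) '' Pareto (U (next s a))) := by
  obtain rfl : Pareto = fun X ↦ {u | Maximal (· ∈ X) u} :=
    funext fun X ↦ (hPareto X).trans (setOf_not_dominated_eq_setOf_maximal X)
  obtain rfl : U = attainable act V RA RP := funext hU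
  rw [attainable_eq_biUnion hacyc hVterm hVrec RA RP hs]
  exact setOf_maximal_biUnion_image_setOf_maximal (p := (· ∈ act s))
    (f := fun a u ↦ ((RA s a, RP s a) : ℝ × ℝ) + u) (fun _ ↦ monotone_id.const_add _)
    fun a _ ↦ attainable_finite act V RA RP (next s a)
end

section
/- Consider a DDP in which every trajectory from s₀ contains at most H state-action pairs, let B ≥ 0 and ε > 0, and define the ε-discretized rewards R̃^X(s,a) := ε·⌊R^X(s,a)/ε⌋ for X ∈ {A, P}. Let V*_P := max{ V(π, R^P) : π a policy with V(π, R^A) ≥ max_{π'} V(π', R^A) − B }. Then every policy π̃ attaining the maximum max{ V(π, R̃^P) : π a policy with V(π, R̃^A) ≥ max_{π'} V(π', R̃^A) − (B + Hε) } satisfies V(π̃, R^P) ≥ V*_P − Hε. -/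
/-!
Rounding a reward down to a multiple of `ε` lowers it by less than `ε`, so along any trajectory
of at most `H` steps the discretized value lies between `V - Hε` and `V`, for the agent and the
principal alike. Hence a principal-optimal `B`-implementable policy `π*` stays feasible in the
discretized problem with budget `B + Hε`; there it is beaten by `π̃`, and translating the two
principal values back costs at most `Hε`.
-/

lemma mul_floor_div_le {ε : ℝ} (hε : 0 < ε) (r : ℝ) : ε * ⌊r / ε⌋ ≤ r := by
  calc ε * ⌊r / ε⌋ ≤ ε * (r / ε) := mul_le_mul_of_nonneg_left (Int.floor_le _) hε.le
    _ = r := by field_simp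

lemma le_mul_floor_div_add {ε : ℝ} (hε : 0 < ε) (r : ℝ) : r ≤ ε * ⌊r / ε⌋ + ε := by
  calc r = ε * (r / ε) := by field_simp
    _ ≤ ε * (⌊r / ε⌋ + 1) := mul_le_mul_of_nonneg_left (Int.lt_floor_add_one _).le hε.le
    _ = ε * ⌊r / ε⌋ + ε := by ring

section Value

variable {S A : Type} {act : S → Finset A} {next : S → A → S} {rank : S → ℕ}
  {V : (S → A) → (S → A → ℝ) → S → ℝ}
  (hacyc : ∀ s, ∀ a ∈ act s, rank (next s a) < rank s)
  (hVterm : ∀ (π : S → A) (R : S → A → ℝ) (s : S), act s = ∅ → V π R s = 0)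
  (hVrec : ∀ (π : S → A) (R : S → A → ℝ) (s : S), act s ≠ ∅ →
    V π R s = R s (π s) + V π R (next s (π s)))
  {π : S → A} (hπ : ∀ s, act s ≠ ∅ → π s ∈ act s)
include hacyc hVterm hVrec hπ

/-- `rank s` bounds the number of steps taken from `s`, so a per-step slack of `c` adds up to at
most `rank s * c`. -/
lemma value_le_value_add_rank_mul {R R' : S → A → ℝ} {c : ℝ} (hc : 0 ≤ c)
    (hR : ∀ s a, R s a ≤ R' s a + c) (s : S) : V π R s ≤ V π R' s + rank s * c := by
  induction hs : rank s using Nat.strong_induction_on generalizing s with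
  | _ n ih =>
    subst hs
    by_cases hact : act s = ∅
    · rw [hVterm π R s hact, hVterm π R' s hact]
      positivity
    · have hlt : rank (next s (π s)) < rank s := hacyc s (π s) (hπ s hact)
      have hstep : (rank (next s (π s)) : ℝ) + 1 ≤ rank s := by exact_mod_cast hlt
      have hnext := ih _ hlt (next s (π s)) rfl
      rw [hVrec π R s hact, hVrec π R' s hact]
      nlinarith [hR s (π s)]

lemma value_discretize_le {R Rt : S → A → ℝ} {ε : ℝ} (hε : 0 < ε)
    (hRt : ∀ s a, Rt s a = ε * ⌊R s a / ε⌋) (s : S) : V π Rt s ≤ V π R s := by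
  simpa using value_le_value_add_rank_mul hacyc hVterm hVrec hπ le_rfl
    (fun s a => by simpa [hRt] using mul_floor_div_le hε (R s a)) s

lemma value_le_value_discretize_add {R Rt : S → A → ℝ} {ε : ℝ} (hε : 0 < ε)
    (hRt : ∀ s a, Rt s a = ε * ⌊R s a / ε⌋) (s : S) : V π R s ≤ V π Rt s + rank s * ε :=
  value_le_value_add_rank_mul hacyc hVterm hVrec hπ hε.le
    (fun s a => by simpa [hRt] using le_mul_floor_div_add hε (R s a)) s

end Value

theorem stmt_14_general {S A : Type}
    (s₀ : S) (act : S → Finset A) (next : S → A → S)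
    (H : ℕ) (rank : S → ℕ)
    (hacyc : ∀ s, ∀ a ∈ act s, rank (next s a) < rank s)
    (hH : rank s₀ ≤ H)
    (V : (S → A) → (S → A → ℝ) → S → ℝ)
    (hVterm : ∀ (π : S → A) (R : S → A → ℝ) (s : S), act s = ∅ → V π R s = 0)
    (hVrec : ∀ (π : S → A) (R : S → A → ℝ) (s : S), act s ≠ ∅ →
      V π R s = R s (π s) + V π R (next s (π s)))
    (RA RP : S → A → ℝ)
    (B : ℝ) (ε : ℝ) (hε : 0 < ε)
    (RtA RtP : S → A → ℝ)
    (hRtA : ∀ s a, RtA s a = ε * (⌊RA s a / ε⌋ : ℝ))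
    (hRtP : ∀ s a, RtP s a = ε * (⌊RP s a / ε⌋ : ℝ))
    (πA : S → A)
    (hπAopt : ∀ π : S → A, (∀ s, act s ≠ ∅ → π s ∈ act s) → V π RA s₀ ≤ V πA RA s₀)
    (πtA : S → A) (hπtA : ∀ s, act s ≠ ∅ → πtA s ∈ act s)
    (πstar : S → A) (hπstar : ∀ s, act s ≠ ∅ → πstar s ∈ act s)
    (hfeas : V πA RA s₀ - B ≤ V πstar RA s₀)
    (πt : S → A) (hπt : ∀ s, act s ≠ ∅ → πt s ∈ act s)
    (htopt : ∀ π : S → A, (∀ s, act s ≠ ∅ → π s ∈ act s) →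
      V πtA RtA s₀ - (B + H * ε) ≤ V π RtA s₀ → V π RtP s₀ ≤ V πt RtP s₀) :
    V πstar RP s₀ - H * ε ≤ V πt RP s₀ := by
  have hHε : (rank s₀ : ℝ) * ε ≤ H * ε := by gcongr
  have hstar_feas : V πtA RtA s₀ - (B + H * ε) ≤ V πstar RtA s₀ := by
    have := value_discretize_le hacyc hVterm hVrec hπtA hε hRtA s₀
    have := hπAopt πtA hπtA
    have := value_le_value_discretize_add hacyc hVterm hVrec hπstar hε hRtA s₀
    linarith
  calc V πstar RP s₀ - H * ε ≤ V πstar RtP s₀ := by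
        linarith [value_le_value_discretize_add hacyc hVterm hVrec hπstar hε hRtP s₀]
    _ ≤ V πt RtP s₀ := htopt πstar hπstar hstar_feas
    _ ≤ V πt RP s₀ := value_discretize_le hacyc hVterm hVrec hπt hε hRtP s₀

/-- in a DDP in which every trajectory from `s₀` has at most `H`
state-action pairs, any policy optimal for the ε-discretized instance with budget
`B + Hε` guarantees the principal at least `V*_P − Hε` in the original instance. -/
theorem stmt_14 {S A : Type} [Fintype S] [Fintype A]
    (s₀ : S) (act : S → Finset A) (next : S → A → S)
    (H : ℕ) (rank : S → ℕ)
    (hacyc : ∀ s, ∀ a ∈ act s, rank (next s a) < rank s)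
    (hH : rank s₀ ≤ H)
    (V : (S → A) → (S → A → ℝ) → S → ℝ)
    (hVterm : ∀ (π : S → A) (R : S → A → ℝ) (s : S), act s = ∅ → V π R s = 0)
    (hVrec : ∀ (π : S → A) (R : S → A → ℝ) (s : S), act s ≠ ∅ →
      V π R s = R s (π s) + V π R (next s (π s)))
    (RA RP : S → A → ℝ)
    (B : ℝ) (hB : 0 ≤ B) (ε : ℝ) (hε : 0 < ε)
    (RtA RtP : S → A → ℝ)
    (hRtA : ∀ s a, RtA s a = ε * (⌊RA s a / ε⌋ : ℝ))
    (hRtP : ∀ s a, RtP s a = ε * (⌊RP s a / ε⌋ : ℝ))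
    (πA : S → A) (hπA : ∀ s, act s ≠ ∅ → πA s ∈ act s)
    (hπAopt : ∀ π : S → A, (∀ s, act s ≠ ∅ → π s ∈ act s) → V π RA s₀ ≤ V πA RA s₀)
    (πtA : S → A) (hπtA : ∀ s, act s ≠ ∅ → πtA s ∈ act s)
    (hπtAopt : ∀ π : S → A, (∀ s, act s ≠ ∅ → π s ∈ act s) → V π RtA s₀ ≤ V πtA RtA s₀)
    (πstar : S → A) (hπstar : ∀ s, act s ≠ ∅ → πstar s ∈ act s)
    (hfeas : V πA RA s₀ - B ≤ V πstar RA s₀)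
    (hopt : ∀ π : S → A, (∀ s, act s ≠ ∅ → π s ∈ act s) →
      V πA RA s₀ - B ≤ V π RA s₀ → V π RP s₀ ≤ V πstar RP s₀)
    (πt : S → A) (hπt : ∀ s, act s ≠ ∅ → πt s ∈ act s)
    (htfeas : V πtA RtA s₀ - (B + H * ε) ≤ V πt RtA s₀)
    (htopt : ∀ π : S → A, (∀ s, act s ≠ ∅ → π s ∈ act s) →
      V πtA RtA s₀ - (B + H * ε) ≤ V π RtA s₀ → V π RtP s₀ ≤ V πt RtP s₀) :
    V πstar RP s₀ - H * ε ≤ V πt RP s₀ :=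
  stmt_14_general s₀ act next H rank hacyc hH V hVterm hVrec RA RP B ε hε RtA RtP hRtA hRtP πA
    hπAopt πtA hπtA πstar hπstar hfeas πt hπt htopt
end

section
/- In any DDP with budget B ≥ 0, the principal's optimal value over implementable policies equals the optimum of the constrained path problem: max{ V(π, R^P) : π a B-implementable policy } = max{ V(π, R^P) : π a policy with V(π, R^A) ≥ V(π^A, R^A) − B }, and both maxima are attained. -/
/-!
Along the trajectory of a policy `π`, let the bonus pay at each visited state the suboptimality gap
`V(π^A, R^A)(s) - (R^A(s, π s) + V(π^A, R^A)(next s (π s)))` of the agent's choice. These gaps are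
nonnegative by optimality of `π^A`, and they telescope to `V(π^A, R^A) - V(π, R^A)`, the cost of this
bonus. Under it `π` earns exactly `V(π^A, R^A)`, while no policy can earn more, since no step gains more
than its gap. Conversely, if a bonus `R^B` of cost at most `B` makes `π` optimal, then
`V(π^A, R^A) ≤ V(π^A, R^A + R^B) ≤ V(π, R^A + R^B) ≤ V(π, R^A) + B`, the last step because a
trajectory visits each state at most once. Hence `B`-implementability is exactly the budget constraint,
and both problems maximise `V(·, R^P)` over the same finite nonempty set of policies.
-/

open Finset Relation

namespace DDP

variable {S A : Type*}

/-- `V π R s` is the `R`-value of the trajectory of `π` from `s`; `rank` witnesses that the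
transition graph is acyclic. -/
structure IsValue_s17 (act : S → Finset A) (next : S → A → S) (rank : S → ℕ)
    (V : (S → A) → (S → A → ℝ) → S → ℝ) : Prop where
  rank_next_lt : ∀ s, ∀ a ∈ act s, rank (next s a) < rank s
  of_terminal : ∀ π R s, act s = ∅ → V π R s = 0
  of_nonterminal : ∀ π R s, act s ≠ ∅ → V π R s = R s (π s) + V π R (next s (π s))

open Classical in
noncomputable def traj [Fintype S] (act : S → Finset A) (next : S → A → S) (π : S → A) (s : S) :
    Finset S :=
  univ.filter fun t => ReflTransGen (fun u v => act u ≠ ∅ ∧ next u (π u) = v) s t ∧ act t ≠ ∅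

/-- The suboptimality gap `V(π₀, R)(s) - Q(π₀, R)(s, a)` of action `a` at `s`. -/
def gap (next : S → A → S) (V : (S → A) → (S → A → ℝ) → S → ℝ) (R : S → A → ℝ) (π₀ : S → A)
    (s : S) (a : A) : ℝ :=
  V π₀ R s - (R s a + V π₀ R (next s a))

variable {act : S → Finset A} {next : S → A → S} {rank : S → ℕ}
  {V : (S → A) → (S → A → ℝ) → S → ℝ}

namespace IsValue_s17

theorem policy_induction (hV : IsValue_s17 act next rank V) {π : S → A} (hπ : IsPolicy act π)
    {P : S → Prop} (terminal : ∀ s, act s = ∅ → P s)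
    (step : ∀ s, act s ≠ ∅ → P (next s (π s)) → P s) (s : S) : P s := by
  induction s using (measure rank).wf.induction with
  | _ s ih =>
    by_cases hs : act s = ∅
    · exact terminal s hs
    · exact step s hs (ih _ (hV.rank_next_lt s _ (hπ s hs)))

theorem congr_policy (hV : IsValue_s17 act next rank V) {π π' : S → A} (hπ : IsPolicy act π)
    (R : S → A → ℝ) {s : S} (h : ∀ t, rank t ≤ rank s → π t = π' t) : V π R s = V π' R s := by
  induction s using hV.policy_induction hπ with
  | terminal s hs => rw [hV.of_terminal _ _ _ hs, hV.of_terminal _ _ _ hs]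
  | step s hs ih =>
    have hlt := hV.rank_next_lt s _ (hπ s hs)
    rw [hV.of_nonterminal _ _ _ hs, hV.of_nonterminal _ _ _ hs, ← h s le_rfl,
      ih fun t ht => h t (by omega)]

/-- Deviating from `π₀` at `s` alone cannot help. -/
theorem gap_nonneg (hV : IsValue_s17 act next rank V) {R : S → A → ℝ} {π₀ : S → A}
    (hπ₀ : IsPolicy act π₀) (hopt : ∀ π, IsPolicy act π → ∀ s, V π R s ≤ V π₀ R s)
    {s : S} {a : A} (ha : a ∈ act s) : 0 ≤ gap next V R π₀ s a := by
  classical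
  have hs : act s ≠ ∅ := ne_empty_of_mem ha
  have hlt := hV.rank_next_lt s a ha
  have hπ := hπ₀.update ha
  have hnext : V (Function.update π₀ s a) R (next s a) = V π₀ R (next s a) :=
    hV.congr_policy hπ R fun t ht => Function.update_of_ne (by rintro rfl; omega) _ _
  have hdev := hopt _ hπ s
  rw [hV.of_nonterminal _ _ _ hs, Function.update_self, hnext] at hdev
  unfold gap
  linarith

theorem value_add_gap (hV : IsValue_s17 act next rank V) {π : S → A} (hπ : IsPolicy act π)
    (R : S → A → ℝ) (π₀ : S → A) (s : S) :
    V π (fun t a => R t a + gap next V R π₀ t a) s = V π₀ R s := by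
  induction s using hV.policy_induction hπ with
  | terminal s hs => rw [hV.of_terminal _ _ _ hs, hV.of_terminal _ _ _ hs]
  | step s hs ih =>
    rw [hV.of_nonterminal _ _ _ hs, ih, gap]
    ring

theorem value_le_of_le_gap (hV : IsValue_s17 act next rank V) {π : S → A} (hπ : IsPolicy act π)
    {R RB : S → A → ℝ} {π₀ : S → A} (hRB : ∀ s, ∀ a ∈ act s, RB s a ≤ gap next V R π₀ s a)
    (s : S) : V π (fun t a => R t a + RB t a) s ≤ V π₀ R s := by
  induction s using hV.policy_induction hπ with
  | terminal s hs => rw [hV.of_terminal _ _ _ hs, hV.of_terminal _ _ _ hs]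
  | step s hs ih =>
    have hle := hRB s _ (hπ s hs)
    rw [hV.of_nonterminal _ _ _ hs]
    unfold gap at hle
    linarith

end IsValue_s17

section Trajectory

variable [Fintype S]

theorem mem_traj {π : S → A} {s t : S} :
    t ∈ traj act next π s ↔
      ReflTransGen (fun u v => act u ≠ ∅ ∧ next u (π u) = v) s t ∧ act t ≠ ∅ := by
  simp [traj]

theorem ne_empty_of_mem_traj {π : S → A} {s t : S} (ht : t ∈ traj act next π s) : act t ≠ ∅ :=
  (mem_traj.1 ht).2

theorem traj_of_terminal (π : S → A) {s : S} (hs : act s = ∅) : traj act next π s = ∅ := by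
  ext t
  simp only [mem_traj, notMem_empty, iff_false, not_and]
  intro hst ht
  rcases ReflTransGen.cases_head_iff.1 hst with rfl | ⟨_, ⟨hs', _⟩, _⟩
  exacts [ht hs, hs' hs]

theorem traj_of_nonterminal [DecidableEq S] (π : S → A) {s : S} (hs : act s ≠ ∅) :
    traj act next π s = insert s (traj act next π (next s (π s))) := by
  ext t
  simp only [mem_insert, mem_traj, ReflTransGen.cases_head_iff (a := s)]
  constructor
  · rintro ⟨rfl | ⟨_, ⟨-, rfl⟩, h⟩, ht⟩
    exacts [Or.inl rfl, Or.inr ⟨h, ht⟩]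
  · rintro (rfl | ⟨h, ht⟩)
    exacts [⟨Or.inl rfl, hs⟩, ⟨Or.inr ⟨_, ⟨hs, rfl⟩, h⟩, ht⟩]

theorem IsValue_s17.rank_le_of_mem_traj (hV : IsValue_s17 act next rank V) {π : S → A}
    (hπ : IsPolicy act π) {s t : S} (ht : t ∈ traj act next π s) : rank t ≤ rank s := by
  obtain ⟨hst, -⟩ := mem_traj.1 ht
  clear ht
  induction hst with
  | refl => exact le_rfl
  | tail _ huv ih =>
    obtain ⟨hu, rfl⟩ := huv
    exact (hV.rank_next_lt _ _ (hπ _ hu)).le.trans ih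

theorem IsValue_s17.eq_sum_traj (hV : IsValue_s17 act next rank V) {π : S → A} (hπ : IsPolicy act π)
    (R : S → A → ℝ) (s : S) : V π R s = ∑ t ∈ traj act next π s, R t (π t) := by
  classical
  induction s using hV.policy_induction hπ with
  | terminal s hs => rw [hV.of_terminal _ _ _ hs, traj_of_terminal π hs, sum_empty]
  | step s hs ih =>
    have hs_notMem : s ∉ traj act next π (next s (π s)) := fun h =>
      (hV.rank_le_of_mem_traj hπ h).not_gt (hV.rank_next_lt s _ (hπ s hs))
    rw [hV.of_nonterminal _ _ _ hs, traj_of_nonterminal π hs, sum_insert hs_notMem, ih]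

theorem IsValue_s17.value_add (hV : IsValue_s17 act next rank V) {π : S → A} (hπ : IsPolicy act π)
    (R R' : S → A → ℝ) (s : S) : V π (fun t a => R t a + R' t a) s = V π R s + V π R' s := by
  simp only [hV.eq_sum_traj hπ, sum_add_distrib]

theorem IsValue_s17.value_nonneg (hV : IsValue_s17 act next rank V) {π : S → A} (hπ : IsPolicy act π)
    {R : S → A → ℝ} (hR : ∀ t a, 0 ≤ R t a) (s : S) : 0 ≤ V π R s := by
  rw [hV.eq_sum_traj hπ]
  exact sum_nonneg fun t _ => hR t (π t)

/-- A trajectory visits each state at most once. -/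
theorem IsValue_s17.value_le_sum_sum [Fintype A] (hV : IsValue_s17 act next rank V) {π : S → A}
    (hπ : IsPolicy act π) {R : S → A → ℝ} (hR : ∀ t a, 0 ≤ R t a) (s : S) :
    V π R s ≤ ∑ t, ∑ a, R t a := by
  rw [hV.eq_sum_traj hπ]
  calc ∑ t ∈ traj act next π s, R t (π t)
      ≤ ∑ t ∈ traj act next π s, ∑ a, R t a :=
        sum_le_sum fun t _ => single_le_sum (fun a _ => hR t a) (mem_univ _)
    _ ≤ ∑ t, ∑ a, R t a :=
        sum_le_sum_of_subset_of_nonneg (subset_univ _) fun t _ _ => sum_nonneg fun a _ => hR t a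

theorem IsValue_s17.sub_le_value_of_bonus [Fintype A] (hV : IsValue_s17 act next rank V)
    {RA RB : S → A → ℝ} {π₀ π : S → A} (hπ₀ : IsPolicy act π₀) (hπ : IsPolicy act π) {B : ℝ}
    (hRB : ∀ s a, 0 ≤ RB s a) (hcost : ∑ s, ∑ a, RB s a ≤ B) {s₀ : S}
    (hopt : V π₀ (fun s a => RA s a + RB s a) s₀ ≤ V π (fun s a => RA s a + RB s a) s₀) :
    V π₀ RA s₀ - B ≤ V π RA s₀ := by
  have hbonus₀ := hV.value_nonneg hπ₀ hRB s₀
  have hbonus := hV.value_le_sum_sum hπ hRB s₀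
  rw [hV.value_add hπ₀, hV.value_add hπ] at hopt
  linarith

/-- Paying the suboptimality gap of `π`'s choices along its trajectory from `s₀`. -/
theorem IsValue_s17.exists_bonus_of_sub_le_value [Fintype A] (hV : IsValue_s17 act next rank V)
    {RA : S → A → ℝ} {πA π : S → A} (hπA : IsPolicy act πA)
    (hoptA : ∀ π, IsPolicy act π → ∀ s, V π RA s ≤ V πA RA s) (hπ : IsPolicy act π) {B : ℝ}
    {s₀ : S} (hbudget : V πA RA s₀ - B ≤ V π RA s₀) :
    ∃ RB : S → A → ℝ, (∀ s a, 0 ≤ RB s a) ∧ ∑ s, ∑ a, RB s a ≤ B ∧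
      ∀ π', IsPolicy act π' →
        V π' (fun s a => RA s a + RB s a) s₀ ≤ V π (fun s a => RA s a + RB s a) s₀ := by
  classical
  set T := traj act next π s₀
  have hgap : ∀ s ∈ T, 0 ≤ gap next V RA πA s (π s) := fun s hs =>
    hV.gap_nonneg hπA hoptA (hπ s (ne_empty_of_mem_traj hs))
  refine ⟨fun s a => if s ∈ T ∧ a = π s then gap next V RA πA s a else 0, ?_, ?_, ?_⟩
  · intro s a
    dsimp only
    split_ifs with h
    exacts [h.2 ▸ hgap s h.1, le_rfl]
  · have hgap_value := hV.value_add_gap hπ RA πA s₀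
    rw [hV.value_add hπ] at hgap_value
    calc ∑ s, ∑ a, (if s ∈ T ∧ a = π s then gap next V RA πA s a else 0)
        = ∑ s ∈ T, gap next V RA πA s (π s) := by simp [ite_and, sum_ite_eq']
      _ = V π (gap next V RA πA) s₀ := (hV.eq_sum_traj hπ _ s₀).symm
      _ ≤ B := by linarith
  · intro π' hπ'
    calc _ ≤ V πA RA s₀ := by
          refine hV.value_le_of_le_gap hπ' (fun s a ha => ?_) s₀
          split_ifs with h
          exacts [le_rfl, hV.gap_nonneg hπA hoptA ha]
      _ = V π (fun s a => RA s a + gap next V RA πA s a) s₀ := (hV.value_add_gap hπ RA πA s₀).symm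
      _ = _ := by
          rw [hV.eq_sum_traj hπ, hV.eq_sum_traj hπ]
          exact sum_congr rfl fun t (ht : t ∈ T) => by simp [ht]

end Trajectory

end DDP

/-- in a DDP with budget `B ≥ 0`, the principal's optimum over
`B`-implementable policies equals the optimum of the constrained problem
`max { V(π,R^P) : V(π,R^A) ≥ V(π^A,R^A) − B }`, and both maxima are attained. -/
theorem stmt_17 {S A : Type} [Fintype S] [Fintype A]
    (s₀ : S) (act : S → Finset A) (next : S → A → S)
    (rank : S → ℕ) (hacyc : ∀ s, ∀ a ∈ act s, rank (next s a) < rank s)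
    (V : (S → A) → (S → A → ℝ) → S → ℝ)
    (hVterm : ∀ (π : S → A) (R : S → A → ℝ) (s : S), act s = ∅ → V π R s = 0)
    (hVrec : ∀ (π : S → A) (R : S → A → ℝ) (s : S), act s ≠ ∅ →
      V π R s = R s (π s) + V π R (next s (π s)))
    (RA RP : S → A → ℝ)
    (πA : S → A) (hπA : ∀ s, act s ≠ ∅ → πA s ∈ act s)
    (hπAopt : ∀ π : S → A, (∀ s, act s ≠ ∅ → π s ∈ act s) → ∀ s, V π RA s ≤ V πA RA s)
    (B : ℝ) (hB : 0 ≤ B)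
    (Impl : (S → A) → Prop)
    (hImpl : ∀ π : S → A, Impl π ↔
      ∃ RB : S → A → ℝ, (∀ s a, 0 ≤ RB s a) ∧ (∑ s, ∑ a, RB s a) ≤ B ∧
        ∀ π' : S → A, (∀ s, act s ≠ ∅ → π' s ∈ act s) →
          V π' (fun s a => RA s a + RB s a) s₀ ≤ V π (fun s a => RA s a + RB s a) s₀) :
    ∃ π₁ π₂ : S → A,
      (∀ s, act s ≠ ∅ → π₁ s ∈ act s) ∧ Impl π₁ ∧
      (∀ π : S → A, (∀ s, act s ≠ ∅ → π s ∈ act s) → Impl π →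
        V π RP s₀ ≤ V π₁ RP s₀) ∧
      (∀ s, act s ≠ ∅ → π₂ s ∈ act s) ∧ (V πA RA s₀ - B ≤ V π₂ RA s₀) ∧
      (∀ π : S → A, (∀ s, act s ≠ ∅ → π s ∈ act s) →
        V πA RA s₀ - B ≤ V π RA s₀ → V π RP s₀ ≤ V π₂ RP s₀) ∧
      V π₁ RP s₀ = V π₂ RP s₀ := by
  have hV : DDP.IsValue_s17 act next rank V := ⟨hacyc, hVterm, hVrec⟩
  have hImpl_iff : ∀ π, DDP.IsPolicy act π → (Impl π ↔ V πA RA s₀ - B ≤ V π RA s₀) := by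
    intro π hπ
    rw [hImpl]
    constructor
    · rintro ⟨RB, hRB, hcost, hopt⟩
      exact hV.sub_le_value_of_bonus hπA hπ hRB hcost (hopt πA hπA)
    · exact hV.exists_bonus_of_sub_le_value hπA hπAopt hπ
  obtain ⟨π₂, ⟨hπ₂, hbudget⟩, hmax⟩ :=
    Set.exists_max_image {π | DDP.IsPolicy act π ∧ V πA RA s₀ - B ≤ V π RA s₀}
      (fun π => V π RP s₀) (Set.toFinite _) ⟨πA, hπA, by linarith⟩
  exact ⟨π₂, π₂, hπ₂, (hImpl_iff π₂ hπ₂).2 hbudget,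
    fun π hπ hπImpl => hmax π ⟨hπ, (hImpl_iff π hπ).1 hπImpl⟩, hπ₂, hbudget,
    fun π hπ hπbudget => hmax π ⟨hπ, hπbudget⟩, rfl⟩
end
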